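/- Let S be a semigroup, let (X_1, …, X_n) be a fragile list of elements of S, and let A ∈ S be such that the extended list (X_1, …, X_n, A) is sturdy, with cutting point M = max{ 1 ≤ m ≤ n : Q_m ~_L Q_{m+1} } where Q_m denotes the m-th suffix product of (X_1, …, X_n, A). Then M ≤ n and the list (X_{M+1}, …, X_n, A) is fragile; consequently, updating a fragile state by appending A and cutting always yields a fragile list. -/

import Mathlib

/-!
Appending `A` multiplies every suffix product of the fragile list on the right by `A`, and
right multiplication preserves `≤_L`; so the suffix products of the extended list still form a
`≤_L`-chain. Past the cutting point `M` no link of this chain is an `L`-equivalence, by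
maximality of `M`, hence every link there is strict.
-/

/-- Green's L-preorder on a semigroup: `a ≤_L b` iff `a = b` or `a = t * b` for some `t`. -/
def leL {S : Type*} [Semigroup S] (a b : S) : Prop := a = b ∨ ∃ t : S, a = t * b

/-- Strict Green's L-preorder: `a <_L b`. -/
def ltL {S : Type*} [Semigroup S] (a b : S) : Prop := leL a b ∧ ¬ leL b a

/-- Green's L-equivalence: `a ~_L b`. -/
def eqvL {S : Type*} [Semigroup S] (a b : S) : Prop := leL a b ∧ leL b a

/-- Product of the nonempty list `l ++ [a]`.
A nonempty list `(X_1, …, X_n)` of elements of a semigroup is encoded as the pair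
`(l, a)` with `l = [X_1, …, X_{n-1}]` and `a = X_n`. -/
def nprod {S : Type*} [Semigroup S] (l : List S) (a : S) : S := l.foldr (· * ·) a

/-- `suffP l a m` is the product of `(l ++ [a]).drop m`, i.e. the suffix product
`P_{m+1} = X_{m+1} * ⋯ * X_n` (1-indexed) of the nonempty list encoded by `(l, a)`. -/
def suffP {S : Type*} [Semigroup S] (l : List S) (a : S) (m : ℕ) : S := nprod (l.drop m) a

/-- The nonempty list encoded by `(l, a)` is fragile if its chain of suffix products
`P_1 ≤_L P_2 ≤_L ⋯ ≤_L P_n` is strict throughout. -/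
def Fragile {S : Type*} [Semigroup S] (l : List S) (a : S) : Prop :=
  ∀ m, m < l.length → ltL (suffP l a m) (suffP l a (m + 1))

/-- A nonempty list is sturdy if it is not fragile. -/
def Sturdy {S : Type*} [Semigroup S] (l : List S) (a : S) : Prop := ¬ Fragile l a

section

variable {S : Type*} [Semigroup S]

lemma leL_mul_right {p q : S} (h : leL p q) (A : S) : leL (p * A) (q * A) := by
  rcases h with rfl | ⟨t, rfl⟩
  · exact Or.inl rfl
  · exact Or.inr ⟨t, mul_assoc t q A⟩

lemma nprod_mul (xs : List S) (b A : S) : nprod xs b * A = nprod xs (b * A) := by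
  induction xs with
  | nil => rfl
  | cons x xs ih => simp only [nprod, List.foldr_cons] at *; rw [mul_assoc, ih]

lemma suffP_length (l : List S) (a : S) : suffP l a l.length = a := by
  simp [suffP, nprod]

lemma suffP_drop (l : List S) (A : S) (M j : ℕ) :
    suffP (l.drop M) A j = suffP l A (M + j) := by
  rw [suffP, suffP, List.drop_drop, Nat.add_comm]

lemma suffP_append_singleton (l : List S) (a A : S) {k : ℕ} (hk : k ≤ l.length) :
    suffP (l ++ [a]) A k = suffP l a k * A := by
  rw [suffP, suffP, List.drop_append_of_le_length hk, nprod_mul, nprod, nprod,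
    List.foldr_append]
  rfl

lemma fragile_drop_iff (l : List S) (A : S) (M : ℕ) :
    Fragile (l.drop M) A ↔
      ∀ k, M ≤ k → k < l.length → ltL (suffP l A k) (suffP l A (k + 1)) := by
  constructor
  · intro h k hMk hk
    have := h (k - M) (by simp; omega)
    rwa [suffP_drop, suffP_drop, ← Nat.add_assoc, Nat.add_sub_cancel' hMk] at this
  · intro h j hj
    rw [suffP_drop, suffP_drop]
    exact h (M + j) (Nat.le_add_right M j) (by simp at hj; omega)

lemma Fragile.leL_suffP_append_singleton {l : List S} {a : S} (hf : Fragile l a) (A : S)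
    {k : ℕ} (hk : k ≤ l.length) :
    leL (suffP (l ++ [a]) A k) (suffP (l ++ [a]) A (k + 1)) := by
  rcases hk.lt_or_eq with hk | rfl
  · rw [suffP_append_singleton l a A hk.le, suffP_append_singleton l a A hk]
    exact leL_mul_right (hf k hk).1 A
  · have hlen : l.length + 1 = (l ++ [a]).length := by simp
    rw [suffP_append_singleton l a A le_rfl, suffP_length, hlen, suffP_length]
    exact Or.inr ⟨a, rfl⟩

end

theorem append_cut_fragile_general {S : Type*} [Semigroup S] (l : List S) (a : S) (A : S)
    (hf : Fragile l a) (M : ℕ)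
    (hM : IsGreatest
      {m : ℕ | 1 ≤ m ∧ m ≤ (l ++ [a]).length ∧
        eqvL (suffP (l ++ [a]) A (m - 1)) (suffP (l ++ [a]) A m)} M) :
    M ≤ l.length + 1 ∧ Fragile ((l ++ [a]).drop M) A := by
  obtain ⟨⟨-, hMlen, -⟩, hmax⟩ := hM
  simp only [List.length_append, List.length_singleton] at hMlen
  refine ⟨hMlen, (fragile_drop_iff _ A M).2 fun k hMk hk => ?_⟩
  simp only [List.length_append, List.length_singleton] at hk
  have hle := hf.leL_suffP_append_singleton A (Nat.le_of_lt_succ hk)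
  refine ⟨hle, fun hge => ?_⟩
  have : M ≥ k + 1 :=
    hmax ⟨Nat.le_add_left 1 k, by simp; omega, hle, hge⟩
  omega

/-- If `(X_1, …, X_n)` is fragile and appending `A` makes
`(X_1, …, X_n, A)` sturdy with cutting point `M = max { 1 ≤ m ≤ n : Q_m ~_L Q_{m+1} }`
(where `Q_m` are the suffix products of the extended list), then `M ≤ n` and
`(X_{M+1}, …, X_n, A)` is fragile: updating a fragile state by appending and cutting
always yields a fragile list. -/
theorem append_cut_fragile {S : Type*} [Semigroup S] (l : List S) (a : S) (A : S)
    (hf : Fragile l a) (hs : Sturdy (l ++ [a]) A) (M : ℕ)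
    (hM : IsGreatest
      {m : ℕ | 1 ≤ m ∧ m ≤ (l ++ [a]).length ∧
        eqvL (suffP (l ++ [a]) A (m - 1)) (suffP (l ++ [a]) A m)} M) :
    M ≤ l.length + 1 ∧ Fragile ((l ++ [a]).drop M) A :=
  append_cut_fragile_general l a A hf M hM
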